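/- Let D_{2n} be the dihedral group of order 2n with n ≥ 3. Then Γ_CCC(D_{2n}) is always a cograph and a chordal graph; moreover, if n ≡ 2 (mod 4), then Γ_CCC(D_{2n}) contains an induced 2K_2, so it is neither a split graph nor a threshold graph. -/

import Mathlib

/-- The set of conjugacy classes of non-central elements of `G`. -/
def NCClass (G : Type*) [Group G] : Type _ :=
  {c : ConjClasses G // ∃ x : G, ConjClasses.mk x = c ∧ x ∉ Subgroup.center G}

/-- The conjugacy class graph associated to a property `P` of subgroups:
two distinct non-central conjugacy classes are adjacent iff they have
representatives `a`, `b` with `P ⟨a, b⟩`. -/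
def classGraph (G : Type*) [Group G] (P : Subgroup G → Prop) :
    SimpleGraph (NCClass G) where
  Adj c d := c ≠ d ∧ ∃ a b : G, ConjClasses.mk a = c.1 ∧ ConjClasses.mk b = d.1 ∧
    P (Subgroup.closure {a, b})
  symm := by
    constructor
    rintro c d ⟨hne, a, b, ha, hb, hP⟩
    refine ⟨hne.symm, b, a, hb, ha, ?_⟩
    rwa [Set.pair_comm]
  loopless := by constructor; rintro c ⟨hne, -⟩; exact hne rfl

/-- The commuting conjugacy class graph `Γ_CCC(G)`. -/
def cccGraph (G : Type*) [Group G] : SimpleGraph (NCClass G) :=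
  classGraph G (fun H => ∀ x ∈ H, ∀ y ∈ H, x * y = y * x)

/-- The nilpotent conjugacy class graph `Γ_NCC(G)`. -/
def nccGraph (G : Type*) [Group G] : SimpleGraph (NCClass G) :=
  classGraph G (fun H => Group.IsNilpotent H)

/-- The solvable conjugacy class graph `Γ_SCC(G)`. -/
def sccGraph (G : Type*) [Group G] : SimpleGraph (NCClass G) :=
  classGraph G (fun H => IsSolvable H)

/-- A graph contains an induced path `P₄` on four vertices. -/
def HasInducedP4 {V : Type*} (Γ : SimpleGraph V) : Prop :=
  ∃ a b c d : V, a ≠ b ∧ a ≠ c ∧ a ≠ d ∧ b ≠ c ∧ b ≠ d ∧ c ≠ d ∧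
    Γ.Adj a b ∧ Γ.Adj b c ∧ Γ.Adj c d ∧ ¬Γ.Adj a c ∧ ¬Γ.Adj a d ∧ ¬Γ.Adj b d

/-- A graph is a cograph iff it has no induced `P₄`. -/
def IsCograph {V : Type*} (Γ : SimpleGraph V) : Prop := ¬ HasInducedP4 Γ

/-- A graph contains an induced cycle `Cₙ`. -/
def HasInducedCycle {V : Type*} (Γ : SimpleGraph V) (n : ℕ) : Prop :=
  ∃ f : ZMod n → V, Function.Injective f ∧
    ∀ i j : ZMod n, Γ.Adj (f i) (f j) ↔ (j = i + 1 ∨ i = j + 1)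

/-- A graph is chordal iff it has no induced cycle `Cₙ` for `n ≥ 4`. -/
def IsChordal {V : Type*} (Γ : SimpleGraph V) : Prop :=
  ∀ n : ℕ, 4 ≤ n → ¬ HasInducedCycle Γ n

/-- A graph contains an induced `2K₂`. -/
def Has2K2 {V : Type*} (Γ : SimpleGraph V) : Prop :=
  ∃ a b c d : V, a ≠ b ∧ a ≠ c ∧ a ≠ d ∧ b ≠ c ∧ b ≠ d ∧ c ≠ d ∧
    Γ.Adj a b ∧ Γ.Adj c d ∧ ¬Γ.Adj a c ∧ ¬Γ.Adj a d ∧ ¬Γ.Adj b c ∧ ¬Γ.Adj b d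

/-- A graph contains an induced claw `K_{1,3}`: a vertex with three pairwise
non-adjacent neighbours. -/
def HasClaw {V : Type*} (Γ : SimpleGraph V) : Prop :=
  ∃ v a b c : V, a ≠ b ∧ a ≠ c ∧ b ≠ c ∧
    Γ.Adj v a ∧ Γ.Adj v b ∧ Γ.Adj v c ∧ ¬Γ.Adj a b ∧ ¬Γ.Adj a c ∧ ¬Γ.Adj b c

/-- A graph is claw-free iff it has no induced `K_{1,3}`. -/
def IsClawFree {V : Type*} (Γ : SimpleGraph V) : Prop := ¬ HasClaw Γ

/-- A graph is split iff it has no induced `C₄`, `C₅` or `2K₂`. -/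
def IsSplit {V : Type*} (Γ : SimpleGraph V) : Prop :=
  ¬ HasInducedCycle Γ 4 ∧ ¬ HasInducedCycle Γ 5 ∧ ¬ Has2K2 Γ

/-- A graph is threshold iff it has no induced `P₄`, `C₄`, `C₅` or `2K₂`. -/
def IsThreshold {V : Type*} (Γ : SimpleGraph V) : Prop :=
  ¬ HasInducedP4 Γ ∧ ¬ HasInducedCycle Γ 4 ∧ ¬ HasInducedCycle Γ 5 ∧ ¬ Has2K2 Γ

/-- An EPPO group: every non-identity element has prime power order. -/
def IsEPPO (G : Type*) [Group G] : Prop :=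
  ∀ g : G, g ≠ 1 → IsPrimePow (orderOf g)

/-!
In `D_{2n}` the centralizer of every non-central element is abelian: a non-central rotation
commutes only with rotations, and a reflection `s rʲ` commutes, besides central elements, only
with the reflections `s rⁱ` with `2i = 2j`. In such a group commuting is transitive through
non-central elements, so after conjugating two commuting pairs onto a common middle element,
adjacency in `Γ_CCC` is transitive: the graph is a disjoint union of cliques, which has no
induced `P₄` and no induced cycle of length at least four. When `n = 2m` with `m` odd, the
classes of `r` and `r²` and the classes of `s` and `s rᵐ` form two edges with no edge between
them: `s` and `s rᵐ` commute because `2m = 0`, lie in different classes because `m` is odd,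
and no non-central rotation commutes with a reflection.
-/

/-- A CA-group: the centralizer of every non-central element is abelian. -/
def IsCAGroup (G : Type*) [Group G] : Prop :=
  ∀ y : G, y ∉ Subgroup.center G → ∀ x z : G, Commute x y → Commute y z → Commute x z

namespace NCClass

variable {G : Type*} [Group G]

def mk (x : G) (hx : x ∉ Subgroup.center G) : NCClass G :=
  ⟨ConjClasses.mk x, x, rfl, hx⟩

theorem notMem_center_of_mk_eq {c : NCClass G} {a : G} (ha : ConjClasses.mk a = c.1) :
    a ∉ Subgroup.center G := by
  obtain ⟨x, hx, hxc⟩ := c.2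
  intro ha_center
  have hax : IsConj a x := ConjClasses.mk_eq_mk_iff_isConj.1 (ha.trans hx.symm)
  exact hxc (hax.eq_of_left_mem_center ha_center ▸ ha_center)

end NCClass

section cccGraph

variable {G : Type*} [Group G]

theorem cccGraph_adj_iff {c d : NCClass G} :
    (cccGraph G).Adj c d ↔
      c ≠ d ∧ ∃ a b : G, ConjClasses.mk a = c.1 ∧ ConjClasses.mk b = d.1 ∧ Commute a b := by
  refine and_congr_right fun _ => exists₂_congr fun a b => and_congr_right fun _ =>
    and_congr_right fun _ => ⟨fun h => h a ?_ b ?_, fun hab x hx y hy => ?_⟩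
  · exact Subgroup.subset_closure (Set.mem_insert a {b})
  · exact Subgroup.subset_closure (Set.mem_insert_of_mem a rfl)
  · have hcomm : ∀ u ∈ ({a, b} : Set G), ∀ v ∈ ({a, b} : Set G), u * v = v * u := by
      rintro u (rfl | rfl) v (rfl | rfl)
      exacts [rfl, hab.eq, hab.eq.symm, rfl]
    have hle := Subgroup.closure_le_centralizer_centralizer ({a, b} : Set G)
    exact Set.centralizer_centralizer_comm_of_comm hcomm x (hle hx) y (hle hy)

theorem cccGraph_adj_mk {x y : G} (hx : x ∉ Subgroup.center G) (hy : y ∉ Subgroup.center G)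
    (hxy : ¬ IsConj x y) (hcomm : Commute x y) :
    (cccGraph G).Adj (NCClass.mk x hx) (NCClass.mk y hy) :=
  cccGraph_adj_iff.2 ⟨fun h => hxy (ConjClasses.mk_eq_mk_iff_isConj.1 (congrArg Subtype.val h)),
    x, y, rfl, rfl, hcomm⟩

theorem IsCAGroup.cccGraph_adj_trans (hG : IsCAGroup G) ⦃c d e : NCClass G⦄
    (hcd : (cccGraph G).Adj c d) (hde : (cccGraph G).Adj d e) (hce : c ≠ e) :
    (cccGraph G).Adj c e := by
  obtain ⟨-, a, b, ha, hb, hab⟩ := cccGraph_adj_iff.1 hcd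
  obtain ⟨-, b', z, hb', hz, hb'z⟩ := cccGraph_adj_iff.1 hde
  obtain ⟨g, rfl⟩ := isConj_iff.1 (ConjClasses.mk_eq_mk_iff_isConj.1 (hb.trans hb'.symm))
  have hz' : ConjClasses.mk (g⁻¹ * z * g) = e.1 :=
    (ConjClasses.mk_eq_mk_iff_isConj.2 (isConj_iff.2 ⟨g, by group⟩)).trans hz
  have hbz : Commute b (g⁻¹ * z * g) := by
    simpa [mul_assoc] using (hb'z.conj g⁻¹)
  exact cccGraph_adj_iff.2
    ⟨hce, a, _, ha, hz', hG b (NCClass.notMem_center_of_mk_eq hb) a _ hab hbz⟩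

end cccGraph

theorem ZMod.natCast_ne_zero_of_lt {m k : ℕ} (hk : 0 < k) (hkm : k < m) : (k : ZMod m) ≠ 0 := by
  rw [Ne, ZMod.natCast_eq_zero_iff]
  exact Nat.not_dvd_of_pos_of_lt hk hkm

theorem ZMod.natCast_ne_two_mul {n m : ℕ} (hn : 2 ∣ n) (hm : Odd m) (k : ZMod n) :
    (m : ZMod n) ≠ 2 * k := by
  intro h
  have h2 := congrArg (ZMod.castHom hn (ZMod 2)) h
  rw [map_natCast, hm.natCast_zmod_two, map_mul, map_ofNat] at h2
  exact (by decide : ∀ x : ZMod 2, (1 : ZMod 2) ≠ 2 * x) _ h2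

section InducedSubgraphs

variable {V : Type*} {Γ : SimpleGraph V}

theorem isCograph_of_adj_trans
    (h : ∀ ⦃a b c : V⦄, Γ.Adj a b → Γ.Adj b c → a ≠ c → Γ.Adj a c) : IsCograph Γ := by
  rintro ⟨a, b, c, -, -, hac, -, -, -, -, hab, hbc, -, hnac, -, -⟩
  exact hnac (h hab hbc hac)

theorem isChordal_of_adj_trans
    (h : ∀ ⦃a b c : V⦄, Γ.Adj a b → Γ.Adj b c → a ≠ c → Γ.Adj a c) : IsChordal Γ := by
  rintro m hm ⟨f, hf, hadj⟩
  have h1 : ((1 : ℕ) : ZMod m) ≠ 0 := ZMod.natCast_ne_zero_of_lt one_pos (by omega)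
  have h2 : ((2 : ℕ) : ZMod m) ≠ 0 := ZMod.natCast_ne_zero_of_lt two_pos (by omega)
  have h3 : ((3 : ℕ) : ZMod m) ≠ 0 := ZMod.natCast_ne_zero_of_lt three_pos (by omega)
  push_cast at h1 h2 h3
  have h02 : f 0 ≠ f 2 := fun he => h2 (hf he).symm
  rcases (hadj 0 2).1 (h ((hadj 0 1).2 (.inl (zero_add 1).symm))
      ((hadj 1 2).2 (.inl (by norm_num))) h02) with h' | h'
  · exact h1 (by linear_combination h')
  · exact h3 (by linear_combination -h')

theorem has2K2_of_adj {a b c d : V} (hab : Γ.Adj a b) (hcd : Γ.Adj c d) (hac : ¬ Γ.Adj a c)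
    (had : ¬ Γ.Adj a d) (hbc : ¬ Γ.Adj b c) (hbd : ¬ Γ.Adj b d) : Has2K2 Γ := by
  refine ⟨a, b, c, d, hab.ne, ?_, ?_, ?_, ?_, hcd.ne, hab, hcd, hac, had, hbc, hbd⟩
  · rintro rfl; exact hbc hab.symm
  · rintro rfl; exact hbd hab.symm
  · rintro rfl; exact hac hab
  · rintro rfl; exact had hab

end InducedSubgraphs

namespace DihedralGroup

variable {n : ℕ}

theorem commute_r_r (i j : ZMod n) : Commute (r i) (r j) := by
  simp only [Commute, SemiconjBy, r_mul_r, add_comm]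

theorem commute_r_sr_iff {i j : ZMod n} : Commute (r i) (sr j) ↔ 2 * i = 0 := by
  simp only [Commute, SemiconjBy, r_mul_sr, sr_mul_r, sr.injEq]
  constructor <;> intro h <;> linear_combination -h

theorem commute_sr_sr_iff {i j : ZMod n} : Commute (sr i) (sr j) ↔ 2 * i = 2 * j := by
  simp only [Commute, SemiconjBy, sr_mul_sr, r.injEq]
  constructor <;> intro h <;> linear_combination -h

theorem r_mem_center_iff {i : ZMod n} : r i ∈ Subgroup.center (DihedralGroup n) ↔ 2 * i = 0 := by
  refine ⟨fun h => commute_r_sr_iff.1 (Subgroup.mem_center_iff.1 h (sr 0)).symm, fun h => ?_⟩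
  rw [Subgroup.mem_center_iff]
  rintro (j | j)
  · exact (commute_r_r i j).symm
  · exact (commute_r_sr_iff.2 h).symm

theorem sr_notMem_center {j : ZMod n} (h2 : (2 : ZMod n) ≠ 0) :
    sr j ∉ Subgroup.center (DihedralGroup n) := fun h =>
  h2 (by simpa using commute_r_sr_iff.1 (Subgroup.mem_center_iff.1 h (r 1)))

theorem isCAGroup : IsCAGroup (DihedralGroup n) := by
  have central_commute {x : DihedralGroup n} (hx : x ∈ Subgroup.center _) (y) : Commute x y :=
    (Subgroup.mem_center_iff.1 hx y).symm
  rintro (j | j) hy (i | i) (k | k) hxy hyz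
  · exact commute_r_r i k
  · exact absurd (r_mem_center_iff.2 (commute_r_sr_iff.1 hyz)) hy
  · exact absurd (r_mem_center_iff.2 (commute_r_sr_iff.1 hxy.symm)) hy
  · exact absurd (r_mem_center_iff.2 (commute_r_sr_iff.1 hyz)) hy
  · exact central_commute (r_mem_center_iff.2 (commute_r_sr_iff.1 hxy)) _
  · exact central_commute (r_mem_center_iff.2 (commute_r_sr_iff.1 hxy)) _
  · exact (central_commute (r_mem_center_iff.2 (commute_r_sr_iff.1 hyz.symm)) _).symm
  · exact commute_sr_sr_iff.2 ((commute_sr_sr_iff.1 hxy).trans (commute_sr_sr_iff.1 hyz))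

theorem isConj_r {i : ZMod n} {a : DihedralGroup n} (h : IsConj (r i) a) :
    a = r i ∨ a = r (-i) := by
  obtain ⟨c | c, rfl⟩ := isConj_iff.1 h
  · left; simp only [inv_r, r_mul_r]; congr 1; ring
  · right; simp only [inv_sr, sr_mul_r, sr_mul_sr]; congr 1; ring

theorem isConj_sr {j : ZMod n} {a : DihedralGroup n} (h : IsConj (sr j) a) :
    ∃ k, a = sr (j + 2 * k) := by
  obtain ⟨c | c, rfl⟩ := isConj_iff.1 h
  · exact ⟨-c, by simp only [inv_r, r_mul_sr, sr_mul_r]; congr 1; ring⟩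
  · exact ⟨c - j, by simp only [inv_sr, sr_mul_sr, r_mul_sr]; congr 1; ring⟩

theorem not_cccGraph_adj_r_sr {i j : ZMod n} {c d : NCClass (DihedralGroup n)}
    (hc : c.1 = ConjClasses.mk (r i)) (hd : d.1 = ConjClasses.mk (sr j)) :
    ¬ (cccGraph (DihedralGroup n)).Adj c d := by
  intro h
  obtain ⟨-, a, b, ha, hb, hab⟩ := cccGraph_adj_iff.1 h
  obtain ⟨k, rfl⟩ := isConj_sr (ConjClasses.mk_eq_mk_iff_isConj.1 (hd.symm.trans hb.symm))
  have ha_center := NCClass.notMem_center_of_mk_eq ha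
  rcases isConj_r (ConjClasses.mk_eq_mk_iff_isConj.1 (hc.symm.trans ha.symm)) with rfl | rfl <;>
    exact ha_center (r_mem_center_iff.2 (commute_r_sr_iff.1 hab))

theorem has2K2_cccGraph (hn : 3 ≤ n) (hmod : n % 4 = 2) :
    Has2K2 (cccGraph (DihedralGroup n)) := by
  obtain ⟨m, hm_odd, rfl⟩ : ∃ m, Odd m ∧ n = 2 * m := ⟨n / 2, Nat.odd_iff.2 (by omega), by omega⟩
  have natCast_ne_zero (k : ℕ) (hk : 0 < k) (hk' : k < 5) : (k : ZMod (2 * m)) ≠ 0 :=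
    ZMod.natCast_ne_zero_of_lt hk (by omega)
  have h1 := natCast_ne_zero 1 (by norm_num) (by norm_num)
  have h2 := natCast_ne_zero 2 (by norm_num) (by norm_num)
  have h3 := natCast_ne_zero 3 (by norm_num) (by norm_num)
  have h4 := natCast_ne_zero 4 (by norm_num) (by norm_num)
  push_cast at h1 h2 h3 h4
  have hr1 : r (1 : ZMod (2 * m)) ∉ Subgroup.center _ :=
    fun h => h2 (by simpa using r_mem_center_iff.1 h)
  have hr2 : r (2 : ZMod (2 * m)) ∉ Subgroup.center _ :=
    fun h => h4 (by linear_combination r_mem_center_iff.1 h)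
  have hr12 : ¬ IsConj (r (1 : ZMod (2 * m))) (r 2) := fun h => by
    rcases isConj_r h with h' | h' <;> rw [r.injEq] at h'
    exacts [h1 (by linear_combination h'), h3 (by linear_combination h')]
  have hsr : ¬ IsConj (sr (0 : ZMod (2 * m))) (sr m) := fun h => by
    obtain ⟨k, hk⟩ := isConj_sr h
    exact ZMod.natCast_ne_two_mul ⟨m, rfl⟩ hm_odd k (by simpa using hk)
  have hm : 2 * (m : ZMod (2 * m)) = 0 := by exact_mod_cast ZMod.natCast_self (2 * m)
  exact has2K2_of_adj (cccGraph_adj_mk hr1 hr2 hr12 (commute_r_r 1 2))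
    (cccGraph_adj_mk (sr_notMem_center h2) (sr_notMem_center h2) hsr
      (commute_sr_sr_iff.2 (by rw [mul_zero, hm])))
    (not_cccGraph_adj_r_sr rfl rfl) (not_cccGraph_adj_r_sr rfl rfl)
    (not_cccGraph_adj_r_sr rfl rfl) (not_cccGraph_adj_r_sr rfl rfl)

end DihedralGroup

theorem ccc_dihedral (n : ℕ) (hn : 3 ≤ n) :
    IsCograph (cccGraph (DihedralGroup n)) ∧ IsChordal (cccGraph (DihedralGroup n)) ∧
    (n % 4 = 2 → Has2K2 (cccGraph (DihedralGroup n)) ∧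
      ¬ IsSplit (cccGraph (DihedralGroup n)) ∧
      ¬ IsThreshold (cccGraph (DihedralGroup n))) := by
  have hCA : IsCAGroup (DihedralGroup n) := DihedralGroup.isCAGroup
  refine ⟨isCograph_of_adj_trans hCA.cccGraph_adj_trans,
    isChordal_of_adj_trans hCA.cccGraph_adj_trans, fun hmod => ?_⟩
  have h2K2 := DihedralGroup.has2K2_cccGraph hn hmod
  exact ⟨h2K2, fun hsplit => hsplit.2.2 h2K2, fun hthr => hthr.2.2.2 h2K2⟩
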